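/- arXiv:2406.06818 — 3 statements merged into one kernel-verified Lean document; each statement's English description precedes it below -/
import Mathlib

section
/- Class-conditional coverage of RC3P (Theorem 1). Let (Ω, 𝓕, P) be a probability space, 𝒳 a measurable space, K ≥ 1 an integer, and let X : Ω → 𝒳 and Y : Ω → {1,…,K} be random variables. Let V : 𝒳 × {1,…,K} → ℝ (score function) and r : 𝒳 × {1,…,K} → ℕ (rank function) be measurable. Fix α ∈ (0,1), and for each class y ∈ {1,…,K} fix a score threshold Q(y) ∈ ℝ, a rank threshold k̂(y) ∈ ℕ, and a nominal level α̂_y ∈ ℝ. Assume that for every class y with P(Y = y) > 0: (i) the class-wise top-k̂(y) error ε_y := P(r(X,Y) > k̂(y) | Y = y) satisfies ε_y < α; (ii) 0 ≤ α̂_y ≤ α − ε_y; and (iii) P(V(X,Y) ≤ Q(y) | Y = y) ≥ 1 − α̂_y. Then the RC3P prediction set Ĉ^{RC3P}(x) := {y ∈ {1,…,K} : V(x,y) ≤ Q(y) and r(x,y) ≤ k̂(y)} achieves class-conditional coverage: for every class y with P(Y = y) > 0, P(Y ∈ Ĉ^{RC3P}(X) | Y = y) ≥ 1 − α. -/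
open MeasureTheory

/-- The probability of an event, as a real number. -/
noncomputable def pr {Ω : Type*} [MeasurableSpace Ω] (P : Measure Ω) (A : Set Ω) : ℝ :=
  (P A).toReal

/-- Conditional probability `P(A | B) = P(A ∩ B) / P(B)`, as a real number. -/
noncomputable def cpr {Ω : Type*} [MeasurableSpace Ω] (P : Measure Ω) (A B : Set Ω) : ℝ :=
  pr P (A ∩ B) / pr P B

/-! Intersected with `{Y = y}`, the event that the score of the true class is below `Q y`
is covered by the event `Y ∈ Ĉ(X)` together with the top-`k̂(y)` error event, so by
subadditivity `P(Y ∈ Ĉ(X) | Y = y) ≥ (1 - α̂_y) - ε_y ≥ 1 - α`. -/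

theorem cpr_le_cpr_add_cpr_of_inter_subset {Ω : Type*} [MeasurableSpace Ω]
    (P : Measure Ω) [IsFiniteMeasure P] {A C E S : Set Ω} (h : A ∩ S ⊆ C ∪ E) :
    cpr P A S ≤ cpr P C S + cpr P E S := by
  have hsub : A ∩ S ⊆ C ∩ S ∪ E ∩ S := fun ω hω => by
    rcases h hω with hC | hE
    exacts [Or.inl ⟨hC, hω.2⟩, Or.inr ⟨hE, hω.2⟩]
  have hpr : pr P (A ∩ S) ≤ pr P (C ∩ S) + pr P (E ∩ S) :=
    (measureReal_mono hsub).trans (measureReal_union_le _ _)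
  rw [cpr, cpr, cpr, ← add_div]
  exact div_le_div_of_nonneg_right hpr ENNReal.toReal_nonneg

theorem rc3p_class_conditional_coverage_general
    {Ω 𝒳 : Type*} [MeasurableSpace Ω]
    (P : Measure Ω) [IsProbabilityMeasure P]
    (K : ℕ)
    (X : Ω → 𝒳) (Y : Ω → Fin K)
    (V : 𝒳 → Fin K → ℝ) (r : 𝒳 → Fin K → ℕ)
    (α : ℝ)
    (Q : Fin K → ℝ) (khat : Fin K → ℕ) (αhat : Fin K → ℝ)
    (hαhat : ∀ y : Fin K, 0 < pr P {ω | Y ω = y} →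
      0 ≤ αhat y ∧ αhat y ≤ α - cpr P {ω | khat y < r (X ω) (Y ω)} {ω | Y ω = y})
    (hscore : ∀ y : Fin K, 0 < pr P {ω | Y ω = y} →
      1 - αhat y ≤ cpr P {ω | V (X ω) (Y ω) ≤ Q y} {ω | Y ω = y}) :
    ∀ y : Fin K, 0 < pr P {ω | Y ω = y} →
      1 - α ≤ cpr P
        {ω | Y ω ∈ {z : Fin K | V (X ω) z ≤ Q z ∧ r (X ω) z ≤ khat z}}
        {ω | Y ω = y} := by
  intro y hy
  have hcover : {ω | V (X ω) (Y ω) ≤ Q y} ∩ {ω | Y ω = y} ⊆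
      {ω | Y ω ∈ {z : Fin K | V (X ω) z ≤ Q z ∧ r (X ω) z ≤ khat z}} ∪
        {ω | khat y < r (X ω) (Y ω)} := by
    rintro ω ⟨hV, hYy : Y ω = y⟩
    simp only [Set.mem_union, Set.mem_ofPred_eq, hYy] at hV ⊢
    exact (le_or_gt _ _).imp (⟨hV, ·⟩) id
  linarith [cpr_le_cpr_add_cpr_of_inter_subset P hcover, hscore y hy, (hαhat y hy).2]

/-- **Theorem 1 (Class-conditional coverage of RC3P).**
If for every class `y` of positive probability the class-wise top-`k̂(y)` error
`ε_y = P(r(X,Y) > k̂(y) | Y = y)` is `< α`, the nominal level satisfies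
`0 ≤ α̂_y ≤ α − ε_y`, and the score threshold `Q(y)` gives class-conditional score coverage
`P(V(X,Y) ≤ Q(y) | Y = y) ≥ 1 − α̂_y`, then the RC3P prediction set
`Ĉ(x) = {y : V(x,y) ≤ Q(y) ∧ r(x,y) ≤ k̂(y)}` achieves
`P(Y ∈ Ĉ(X) | Y = y) ≥ 1 − α` for every class `y` of positive probability. -/
theorem rc3p_class_conditional_coverage
    {Ω 𝒳 : Type*} [MeasurableSpace Ω] [MeasurableSpace 𝒳]
    (P : Measure Ω) [IsProbabilityMeasure P]
    (K : ℕ) (hK : 1 ≤ K)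
    (X : Ω → 𝒳) (Y : Ω → Fin K) (hX : Measurable X) (hY : Measurable Y)
    (V : 𝒳 → Fin K → ℝ) (r : 𝒳 → Fin K → ℕ)
    (hV : ∀ y, Measurable fun x => V x y) (hr : ∀ y, Measurable fun x => r x y)
    (α : ℝ) (hα : α ∈ Set.Ioo (0 : ℝ) 1)
    (Q : Fin K → ℝ) (khat : Fin K → ℕ) (αhat : Fin K → ℝ)
    (htopk : ∀ y : Fin K, 0 < pr P {ω | Y ω = y} →
      cpr P {ω | khat y < r (X ω) (Y ω)} {ω | Y ω = y} < α)
    (hαhat : ∀ y : Fin K, 0 < pr P {ω | Y ω = y} →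
      0 ≤ αhat y ∧ αhat y ≤ α - cpr P {ω | khat y < r (X ω) (Y ω)} {ω | Y ω = y})
    (hscore : ∀ y : Fin K, 0 < pr P {ω | Y ω = y} →
      1 - αhat y ≤ cpr P {ω | V (X ω) (Y ω) ≤ Q y} {ω | Y ω = y}) :
    ∀ y : Fin K, 0 < pr P {ω | Y ω = y} →
      1 - α ≤ cpr P
        {ω | Y ω ∈ {z : Fin K | V (X ω) z ≤ Q z ∧ r (X ω) z ≤ khat z}}
        {ω | Y ω = y} :=
  rc3p_class_conditional_coverage_general P K X Y V r α Q khat αhat hαhat hscore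
end

section
/- Probabilistic core of Theorem 2 (conditions of improved predictive efficiency for RC3P). Let (Ω, 𝓕, P) be a probability space and E a measurable event with p := P(E) satisfying 0 < p < 1. Let A and R be measurable events, let α, B ∈ ℝ, and set ε := P(Rᶜ | E) and D := P(R | Eᶜ). Assume P(A | E) ≥ 1 − α, P(A | Eᶜ) ≥ B, and B − D ≥ (p/(1 − p))·(α − ε). Then P(R) ≤ P(A). -/
open MeasureTheory

/-!
Split both `P(R)` and `P(A)` over `E` and `Eᶜ` by the law of total probability:
`P(R) = p(1 - ε) + (1 - p) D` and `P(A) ≥ p(1 - α) + (1 - p) B`. The difference of the right-hand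
sides is `(1 - p)(B - D) - p(α - ε)`, which is nonnegative by the last hypothesis multiplied by
`1 - p > 0`.
-/

section

variable {Ω : Type*} [MeasurableSpace Ω] (P : Measure Ω)

lemma pr_nonneg (S : Set Ω) : 0 ≤ pr P S :=
  ENNReal.toReal_nonneg

lemma pr_compl [IsProbabilityMeasure P] {E : Set Ω} (hE : MeasurableSet E) :
    pr P Eᶜ = 1 - pr P E :=
  probReal_compl_eq_one_sub hE

/-- Holds also when `P(E) = 0`, where `cpr P S E = 0` because `x / 0 = 0`. -/
lemma pr_inter_eq_mul_cpr [IsFiniteMeasure P] (S E : Set Ω) :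
    pr P (S ∩ E) = pr P E * cpr P S E := by
  by_cases hE : pr P E = 0
  · rw [hE, zero_mul]
    exact measureReal_mono_null Set.inter_subset_right hE
  · exact (mul_div_cancel₀ _ hE).symm

lemma pr_eq_mul_cpr_add_mul_cpr_compl [IsFiniteMeasure P] (S : Set Ω) {E : Set Ω}
    (hE : MeasurableSet E) :
    pr P S = pr P E * cpr P S E + pr P Eᶜ * cpr P S Eᶜ := by
  rw [← pr_inter_eq_mul_cpr, ← pr_inter_eq_mul_cpr]
  exact (measureReal_inter_add_sdiff hE).symm

lemma pr_inter_add_pr_compl_inter [IsFiniteMeasure P] {R : Set Ω} (hR : MeasurableSet R)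
    (E : Set Ω) :
    pr P (R ∩ E) + pr P (Rᶜ ∩ E) = pr P E := by
  rw [Set.inter_comm R, Set.inter_comm Rᶜ]
  exact measureReal_inter_add_sdiff hR

end

theorem theorem2_probabilistic_core_general
    {Ω : Type*} [MeasurableSpace Ω] (P : Measure Ω) [IsProbabilityMeasure P]
    (E A R : Set Ω)
    (hE : MeasurableSet E) (hR : MeasurableSet R)
    (hp1 : pr P E < 1)
    (α B : ℝ)
    (hAE : 1 - α ≤ cpr P A E)
    (hAEc : B ≤ cpr P A Eᶜ)
    (hBD : pr P E / (1 - pr P E) * (α - cpr P Rᶜ E) ≤ B - cpr P R Eᶜ) :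
    pr P R ≤ pr P A := by
  have hq : 0 < 1 - pr P E := sub_pos.2 hp1
  rw [div_mul_eq_mul_div, div_le_iff₀' hq] at hBD
  have hRE := pr_inter_add_pr_compl_inter P hR E
  rw [pr_inter_eq_mul_cpr, pr_inter_eq_mul_cpr] at hRE
  calc pr P R = pr P E * cpr P R E + (1 - pr P E) * cpr P R Eᶜ := by
        rw [pr_eq_mul_cpr_add_mul_cpr_compl P R hE, pr_compl P hE]
    _ ≤ pr P E * (1 - α) + (1 - pr P E) * B := by linear_combination hBD + hRE
    _ ≤ pr P E * cpr P A E + (1 - pr P E) * cpr P A Eᶜ := by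
        gcongr
        exact pr_nonneg P E
    _ = pr P A := by rw [pr_eq_mul_cpr_add_mul_cpr_compl P A hE, pr_compl P hE]

/-- **Probabilistic core of Theorem 2 (conditions of improved predictive efficiency).**
With `p = P(E) ∈ (0,1)`, `ε = P(Rᶜ | E)`, `D = P(R | Eᶜ)`, if `P(A | E) ≥ 1 − α`,
`P(A | Eᶜ) ≥ B`, and `B − D ≥ (p/(1 − p))·(α − ε)`, then `P(R) ≤ P(A)`. -/
theorem theorem2_probabilistic_core
    {Ω : Type*} [MeasurableSpace Ω] (P : Measure Ω) [IsProbabilityMeasure P]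
    (E A R : Set Ω)
    (hE : MeasurableSet E) (hA : MeasurableSet A) (hR : MeasurableSet R)
    (hp0 : 0 < pr P E) (hp1 : pr P E < 1)
    (α B : ℝ)
    (hAE : 1 - α ≤ cpr P A E)
    (hAEc : B ≤ cpr P A Eᶜ)
    (hBD : pr P E / (1 - pr P E) * (α - cpr P Rᶜ E) ≤ B - cpr P R Eᶜ) :
    pr P R ≤ pr P A :=
  theorem2_probabilistic_core_general P E A R hE hR hp1 α B hAE hAEc hBD
end

section
/- Combined guarantee of RC3P: valid class-conditional coverage with no larger expected prediction set than CCP. Let (Ω, 𝓕, P) be a probability space, 𝒳 a measurable space, K ≥ 1 an integer, X : Ω → 𝒳 and Y : Ω → {1,…,K} random variables, and let V : 𝒳 × {1,…,K} → ℝ and r : 𝒳 × {1,…,K} → ℕ be measurable. Fix α ∈ (0,1). For each class y ∈ {1,…,K} assume 0 < p_y := P(Y = y) < 1 and suppose there are: a rank threshold k̂(y) ∈ ℕ with ε_y := P(r(X,y) > k̂(y) | Y = y) < α; a nominal level α̂_y with 0 ≤ α̂_y ≤ α − ε_y; an RC3P score threshold q(y) ∈ ℝ with P(V(X,y) ≤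 q(y) | Y = y) ≥ 1 − α̂_y; a CCP score threshold Q(y) ∈ ℝ with P(V(X,y) ≤ Q(y) | Y = y) ≥ 1 − α; and a real B_y with P(V(X,y) ≤ Q(y) | Y ≠ y) ≥ B_y and B_y − D_y ≥ (p_y/(1 − p_y))·(α − ε_y), where D_y := P(r(X,y) ≤ k̂(y) | Y ≠ y). Define Ĉ^{RC3P}(x) := {y : V(x,y) ≤ q(y) and r(x,y) ≤ k̂(y)} and Ĉ^{CCP}(x) := {y : V(x,y) ≤ Q(y)}. Then: (a) for every class y, P(Y ∈ Ĉ^{RC3P}(X) | Y = y) ≥ 1 − α; and (b) E[|Ĉ^{RC3P}(X)|] ≤ E[|Ĉ^{CCP}(X)|]. -/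
open MeasureTheory

/-! Coverage: given `Y = y`, the label leaves the RC3P set only if it fails the score test
(conditional probability at most `α̂_y`) or the rank test (probability `ε_y`), and
`α̂_y + ε_y ≤ α`.

Efficiency: the expected set size is the sum over classes `y` of `P(y ∈ Ĉ(X))`. The RC3P event
for `y` lies in the rank event `{r(X,y) ≤ k̂(y)}`, whose probability is
`(1 - ε_y) p_y + D_y (1 - p_y)` by total probability over `{Y = y}`, while the CCP event has
probability at least `(1 - α) p_y + B_y (1 - p_y)`; the efficiency condition, multiplied by
`1 - p_y`, is exactly the comparison of these two numbers. -/

open Set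

section ConditionalProbability

variable {Ω : Type*} [MeasurableSpace Ω] {P : Measure Ω} {A R S : Set Ω}

-- `pr P` is definitionally `P.real`, so the `measureReal_*` API applies to it directly.

lemma cpr_congr {A' : Set Ω} (h : A ∩ S = A' ∩ S) : cpr P A S = cpr P A' S := by
  rw [cpr, cpr, h]

lemma cpr_compl [IsFiniteMeasure P] (hR : MeasurableSet R) (hS : pr P S ≠ 0) :
    cpr P Rᶜ S = 1 - cpr P R S := by
  have hsplit : P.real (R ∩ S) + P.real (Rᶜ ∩ S) = P.real S := by
    rw [inter_comm R, inter_comm Rᶜ, ← sdiff_eq]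
    exact measureReal_inter_add_sdiff hR
  rw [cpr, cpr, eq_sub_iff_add_eq, ← add_div, add_comm]
  exact (div_eq_one_iff_eq hS).2 hsplit

lemma cpr_sub_cpr_compl_le_cpr_inter [IsFiniteMeasure P] :
    cpr P A S - cpr P Rᶜ S ≤ cpr P (A ∩ R) S := by
  have hcover : pr P (A ∩ S) ≤ pr P (A ∩ R ∩ S) + pr P (Rᶜ ∩ S) := by
    refine (measureReal_mono (s₂ := A ∩ R ∩ S ∪ Rᶜ ∩ S) ?_).trans (measureReal_union_le _ _)
    rintro ω ⟨hA, hS⟩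
    by_cases hR : ω ∈ R
    exacts [Or.inl ⟨⟨hA, hR⟩, hS⟩, Or.inr ⟨hR, hS⟩]
  rw [cpr, cpr, cpr, ← sub_div]
  exact div_le_div_of_nonneg_right (by linarith) ENNReal.toReal_nonneg

lemma pr_eq_cpr_mul_add_cpr_compl_mul [IsProbabilityMeasure P] (hS : MeasurableSet S)
    (h0 : pr P S ≠ 0) (h1 : pr P S ≠ 1) :
    pr P A = cpr P A S * pr P S + cpr P A Sᶜ * (1 - pr P S) := by
  have hcompl : pr P Sᶜ = 1 - pr P S := probReal_compl_eq_one_sub hS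
  rw [cpr, cpr, hcompl, div_mul_cancel₀ _ h0, div_mul_cancel₀ _ (sub_ne_zero.2 h1.symm)]
  exact (measureReal_inter_add_sdiff hS).symm

lemma pr_le_pr_of_efficiency [IsProbabilityMeasure P] {T : Set Ω} {α B : ℝ}
    (hS : MeasurableSet S) (hR : MeasurableSet R) (hp0 : 0 < pr P S) (hp1 : pr P S < 1)
    (hT : 1 - α ≤ cpr P T S) (hB : B ≤ cpr P T Sᶜ)
    (heff : pr P S / (1 - pr P S) * (α - cpr P Rᶜ S) ≤ B - cpr P R Sᶜ) :
    pr P R ≤ pr P T := by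
  set p := pr P S
  have hq : 0 < 1 - p := sub_pos.2 hp1
  rw [cpr_compl hR hp0.ne', div_mul_eq_mul_div, div_le_iff₀ hq] at heff
  rw [pr_eq_cpr_mul_add_cpr_compl_mul hS hp0.ne' hp1.ne,
    pr_eq_cpr_mul_add_cpr_compl_mul (A := T) hS hp0.ne' hp1.ne]
  nlinarith [mul_le_mul_of_nonneg_right hT hp0.le, mul_le_mul_of_nonneg_right hB hq.le]

end ConditionalProbability

lemma integral_ncard_eq_sum_pr {Ω ι : Type*} [MeasurableSpace Ω] [Fintype ι]
    (P : Measure Ω) [IsFiniteMeasure P] (C : Ω → Set ι)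
    (hC : ∀ i, MeasurableSet {ω | i ∈ C ω}) :
    ∫ ω, ((C ω).ncard : ℝ) ∂P = ∑ i, pr P {ω | i ∈ C ω} := by
  classical
  have hcard : ∀ ω, ((C ω).ncard : ℝ) = ∑ i, {ω | i ∈ C ω}.indicator 1 ω := by
    intro ω
    simp only [indicator_apply, mem_ofPred_eq, Pi.one_apply, Finset.sum_boole]
    rw [ncard_eq_toFinset_card', filter_mem_univ_eq_toFinset]
  have hint i : Integrable ({ω | i ∈ C ω}.indicator (1 : Ω → ℝ)) P :=
    (integrable_const 1).indicator (hC i)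
  simp_rw [hcard]
  rw [integral_finsetSum _ fun i _ => hint i]
  exact Finset.sum_congr rfl fun i _ => integral_indicator_one (hC i)

theorem rc3p_combined_guarantee_general
    {Ω 𝒳 : Type*} [MeasurableSpace Ω] [MeasurableSpace 𝒳]
    (P : Measure Ω) [IsProbabilityMeasure P]
    (K : ℕ)
    (X : Ω → 𝒳) (Y : Ω → Fin K) (hX : Measurable X) (hY : Measurable Y)
    (V : 𝒳 → Fin K → ℝ) (r : 𝒳 → Fin K → ℕ)
    (hV : ∀ y, Measurable fun x => V x y) (hr : ∀ y, Measurable fun x => r x y)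
    (α : ℝ)
    (q Q : Fin K → ℝ) (khat : Fin K → ℕ) (αhat : Fin K → ℝ)
    (hp : ∀ y : Fin K, 0 < pr P {ω | Y ω = y} ∧ pr P {ω | Y ω = y} < 1)
    (hαhat : ∀ y : Fin K,
      0 ≤ αhat y ∧ αhat y ≤ α - cpr P {ω | khat y < r (X ω) y} {ω | Y ω = y})
    (hq : ∀ y : Fin K,
      1 - αhat y ≤ cpr P {ω | V (X ω) y ≤ q y} {ω | Y ω = y})
    (hQ : ∀ y : Fin K,
      1 - α ≤ cpr P {ω | V (X ω) y ≤ Q y} {ω | Y ω = y})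
    (hB : ∀ y : Fin K, ∃ B : ℝ,
      B ≤ cpr P {ω | V (X ω) y ≤ Q y} {ω | Y ω ≠ y} ∧
      pr P {ω | Y ω = y} / (1 - pr P {ω | Y ω = y}) *
          (α - cpr P {ω | khat y < r (X ω) y} {ω | Y ω = y})
        ≤ B - cpr P {ω | r (X ω) y ≤ khat y} {ω | Y ω ≠ y}) :
    (∀ y : Fin K,
      1 - α ≤ cpr P
        {ω | Y ω ∈ {z : Fin K | V (X ω) z ≤ q z ∧ r (X ω) z ≤ khat z}}
        {ω | Y ω = y}) ∧
    ∫ ω, (Set.ncard {y : Fin K | V (X ω) y ≤ q y ∧ r (X ω) y ≤ khat y} : ℝ) ∂P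
      ≤ ∫ ω, (Set.ncard {y : Fin K | V (X ω) y ≤ Q y} : ℝ) ∂P := by
  have hS y : MeasurableSet {ω | Y ω = y} := hY (measurableSet_singleton y)
  have hScore (c : Fin K → ℝ) y : MeasurableSet {ω | V (X ω) y ≤ c y} :=
    measurableSet_le ((hV y).comp hX) measurable_const
  have hRank y : MeasurableSet {ω | r (X ω) y ≤ khat y} :=
    measurableSet_le ((hr y).comp hX) measurable_const
  have hRank_compl y : {ω | khat y < r (X ω) y} = {ω | r (X ω) y ≤ khat y}ᶜ := by
    ext; simp
  refine ⟨fun y => ?_, ?_⟩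
  · have hcov := cpr_sub_cpr_compl_le_cpr_inter (P := P) (A := {ω | V (X ω) y ≤ q y})
      (R := {ω | r (X ω) y ≤ khat y}) (S := {ω | Y ω = y})
    rw [← hRank_compl] at hcov
    rw [cpr_congr (A' := {ω | V (X ω) y ≤ q y} ∩ {ω | r (X ω) y ≤ khat y})]
    · linarith [hq y, (hαhat y).2]
    · ext ω
      constructor <;> rintro ⟨h, rfl⟩ <;> exact ⟨h, rfl⟩
  · rw [integral_ncard_eq_sum_pr P (fun ω => {y | V (X ω) y ≤ q y ∧ r (X ω) y ≤ khat y})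
        fun y => (hScore q y).inter (hRank y),
      integral_ncard_eq_sum_pr P (fun ω => {y | V (X ω) y ≤ Q y}) fun y => hScore Q y]
    refine Finset.sum_le_sum fun y _ => ?_
    obtain ⟨B, hB_lower, hB_eff⟩ := hB y
    rw [hRank_compl] at hB_eff
    calc pr P {ω | V (X ω) y ≤ q y ∧ r (X ω) y ≤ khat y}
        ≤ pr P {ω | r (X ω) y ≤ khat y} := measureReal_mono fun _ h => h.2
      _ ≤ pr P {ω | V (X ω) y ≤ Q y} :=
        pr_le_pr_of_efficiency (hS y) (hRank y) (hp y).1 (hp y).2 (hQ y) hB_lower hB_eff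

/-- **Combined guarantee of RC3P: valid class-conditional coverage with no larger expected
prediction set than CCP.**
Under the feasibility conditions of Theorem 1 for the RC3P thresholds `(q, k̂, α̂)` and the
per-class efficiency conditions of Theorem 2 for the CCP thresholds `Q`, RC3P achieves
(a) class-conditional coverage `P(Y ∈ Ĉ^{RC3P}(X) | Y = y) ≥ 1 − α` for every class `y`,
and (b) expected prediction set size at most that of CCP. -/
theorem rc3p_combined_guarantee
    {Ω 𝒳 : Type*} [MeasurableSpace Ω] [MeasurableSpace 𝒳]
    (P : Measure Ω) [IsProbabilityMeasure P]
    (K : ℕ) (hK : 1 ≤ K)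
    (X : Ω → 𝒳) (Y : Ω → Fin K) (hX : Measurable X) (hY : Measurable Y)
    (V : 𝒳 → Fin K → ℝ) (r : 𝒳 → Fin K → ℕ)
    (hV : ∀ y, Measurable fun x => V x y) (hr : ∀ y, Measurable fun x => r x y)
    (α : ℝ) (hα : α ∈ Set.Ioo (0 : ℝ) 1)
    (q Q : Fin K → ℝ) (khat : Fin K → ℕ) (αhat : Fin K → ℝ)
    (hp : ∀ y : Fin K, 0 < pr P {ω | Y ω = y} ∧ pr P {ω | Y ω = y} < 1)
    (htopk : ∀ y : Fin K,
      cpr P {ω | khat y < r (X ω) y} {ω | Y ω = y} < α)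
    (hαhat : ∀ y : Fin K,
      0 ≤ αhat y ∧ αhat y ≤ α - cpr P {ω | khat y < r (X ω) y} {ω | Y ω = y})
    (hq : ∀ y : Fin K,
      1 - αhat y ≤ cpr P {ω | V (X ω) y ≤ q y} {ω | Y ω = y})
    (hQ : ∀ y : Fin K,
      1 - α ≤ cpr P {ω | V (X ω) y ≤ Q y} {ω | Y ω = y})
    (hB : ∀ y : Fin K, ∃ B : ℝ,
      B ≤ cpr P {ω | V (X ω) y ≤ Q y} {ω | Y ω ≠ y} ∧
      pr P {ω | Y ω = y} / (1 - pr P {ω | Y ω = y}) *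
          (α - cpr P {ω | khat y < r (X ω) y} {ω | Y ω = y})
        ≤ B - cpr P {ω | r (X ω) y ≤ khat y} {ω | Y ω ≠ y}) :
    (∀ y : Fin K,
      1 - α ≤ cpr P
        {ω | Y ω ∈ {z : Fin K | V (X ω) z ≤ q z ∧ r (X ω) z ≤ khat z}}
        {ω | Y ω = y}) ∧
    ∫ ω, (Set.ncard {y : Fin K | V (X ω) y ≤ q y ∧ r (X ω) y ≤ khat y} : ℝ) ∂P
      ≤ ∫ ω, (Set.ncard {y : Fin K | V (X ω) y ≤ Q y} : ℝ) ∂P :=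
  rc3p_combined_guarantee_general P K X Y hX hY V r hV hr α q Q khat αhat hp hαhat hq hQ hB
end
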